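/- Let n ≥ p ≥ 1, α = √2/2, β = 1 − √2/2, and let Y ∈ ℝ^{n×p} satisfy YᵀY = I_p. Then ∑_{u=1}^{n} ∑_{v=1}^{p} [ (I_n − β Y Yᵀ) E_{uv} Yᵀ − Y E_{uv}ᵀ (I_n − β Y Yᵀ) ] · ( E_{uv} − α Y E_{uv}ᵀ Y − β Y Yᵀ E_{uv} ) = −(n−1) Y. -/

import Mathlib

/-!
Over the matrix units `E = single i j 1`, the sums of `E M E` and `Eᵀ M Eᵀ` are `Mᵀ`, and the
sums of `E M Eᵀ` and `Eᵀ M E` are `trace M • 1`. Expanding the summand into six terms of these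
shapes and using `Yᵀ Y = 1` (so `Y Yᵀ Y = Y` and `trace (Y Yᵀ) = p`) turns the sum into
`((1 - β)(1 + α - β) + p (β (2 - β) - α (1 - β)) - n) • Y`. For `α = 1 - β = √2/2` the
constant term is `2α² = 1` and the coefficient of `p` is `1 - 2α² = 0`.
-/

open Matrix

namespace Matrix

variable {m k R : Type*} [Fintype m] [Fintype k]

section Semiring

variable [DecidableEq m] [DecidableEq k] [Semiring R]

theorem sum_single_mul_mul_single (M : Matrix k m R) :
    ∑ i : m, ∑ j : k, single i j (1 : R) * M * single i j (1 : R) = Mᵀ := by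
  simp only [single_mul_mul_single, one_mul, mul_one]
  exact (matrix_eq_sum_single Mᵀ).symm

theorem sum_single_mul_mul_transpose_single (M : Matrix k k R) :
    ∑ i : m, ∑ j : k, single i j (1 : R) * M * (single i j (1 : R))ᵀ =
      trace M • (1 : Matrix m m R) := by
  ext a b
  simp [sum_apply, trace, one_apply, single_apply, ite_and]

theorem sum_transpose_single_mul_mul_single (M : Matrix m m R) :
    ∑ i : m, ∑ j : k, (single i j (1 : R))ᵀ * M * single i j (1 : R) =
      trace M • (1 : Matrix k k R) := by
  rw [Finset.sum_comm]
  simpa only [transpose_single] using sum_single_mul_mul_transpose_single (m := k) M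

theorem sum_transpose_single_mul_mul_transpose_single (M : Matrix m k R) :
    ∑ i : m, ∑ j : k, (single i j (1 : R))ᵀ * M * (single i j (1 : R))ᵀ = Mᵀ := by
  rw [Finset.sum_comm]
  simpa only [transpose_single] using sum_single_mul_mul_single (m := k) M

end Semiring

section Stiefel

variable [DecidableEq k] [CommRing R] {Y : Matrix m k R}

theorem mul_transpose_mul_of_transpose_mul_eq_one (hY : Yᵀ * Y = 1) : Y * Yᵀ * Y = Y := by
  rw [Matrix.mul_assoc, hY, Matrix.mul_one]

theorem trace_mul_transpose_of_transpose_mul_eq_one (hY : Yᵀ * Y = 1) :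
    trace (Y * Yᵀ) = Fintype.card k := by
  rw [trace_mul_comm, hY, trace_one]

theorem sum_single_second_moment_eq_smul [DecidableEq m] (α β : R) (hY : Yᵀ * Y = 1) :
    ∑ i : m, ∑ j : k,
      ((1 - β • (Y * Yᵀ)) * single i j (1 : R) * Yᵀ
          - Y * (single i j (1 : R))ᵀ * (1 - β • (Y * Yᵀ))) *
        (single i j (1 : R) - α • (Y * (single i j (1 : R))ᵀ * Y)
          - β • (Y * Yᵀ * single i j (1 : R))) =
      ((1 - β) * (1 + α - β) + Fintype.card k * (β * (2 - β) - α * (1 - β))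
        - Fintype.card m) • Y := by
  set Q : Matrix m m R := 1 - β • (Y * Yᵀ)
  have hYYY := mul_transpose_mul_of_transpose_mul_eq_one hY
  have hQY : Q * Y = (1 - β) • Y := by
    rw [Matrix.sub_mul, Matrix.one_mul, Matrix.smul_mul, hYYY, sub_smul, one_smul]
  have expand : ∀ E : Matrix m k R,
      (Q * E * Yᵀ - Y * Eᵀ * Q) * (E - α • (Y * Eᵀ * Y) - β • (Y * Yᵀ * E)) =
        Q * (E * Yᵀ * E) - α • (Q * (E * (Yᵀ * Y) * Eᵀ) * Y)
          - β • (Q * (E * (Yᵀ * (Y * Yᵀ)) * E)) - Y * (Eᵀ * Q * E)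
          + α • (Y * (Eᵀ * (Q * Y) * Eᵀ) * Y)
          + β • (Y * (Eᵀ * (Q * (Y * Yᵀ)) * E)) := by
    intro E
    simp only [Matrix.sub_mul, Matrix.mul_sub, Matrix.mul_smul, smul_sub, Matrix.mul_assoc]
    abel
  simp only [expand, Finset.sum_add_distrib, Finset.sum_sub_distrib, ← Finset.smul_sum,
    ← Matrix.mul_sum, ← Matrix.sum_mul, sum_single_mul_mul_single,
    sum_single_mul_mul_transpose_single, sum_transpose_single_mul_mul_single,
    sum_transpose_single_mul_mul_transpose_single]
  have htrP := trace_mul_transpose_of_transpose_mul_eq_one hY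
  have htrQ : trace Q = Fintype.card m - β * Fintype.card k := by
    rw [trace_sub, trace_one, trace_smul, htrP, smul_eq_mul]
  simp only [htrQ, htrP, hY, trace_one, trace_smul, hQY, transpose_transpose, transpose_mul,
    transpose_smul, transpose_one, ← Matrix.mul_assoc, Matrix.mul_smul, Matrix.smul_mul,
    Matrix.mul_one, hYYY]
  module

end Stiefel

end Matrix

theorem second_moment_identity_general (n p : ℕ)
    (Y : Matrix (Fin n) (Fin p) ℝ) (hY : Yᵀ * Y = 1) :
    ∑ u : Fin n, ∑ v : Fin p,
      ((((1 : Matrix (Fin n) (Fin n) ℝ) - (1 - Real.sqrt 2 / 2) • (Y * Yᵀ))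
          * Matrix.single u v (1 : ℝ) * Yᵀ
        - Y * (Matrix.single u v (1 : ℝ))ᵀ
          * ((1 : Matrix (Fin n) (Fin n) ℝ) - (1 - Real.sqrt 2 / 2) • (Y * Yᵀ)))
      * (Matrix.single u v (1 : ℝ)
        - (Real.sqrt 2 / 2) • (Y * (Matrix.single u v (1 : ℝ))ᵀ * Y)
        - (1 - Real.sqrt 2 / 2) • (Y * Yᵀ * Matrix.single u v (1 : ℝ))))
    = (-((n : ℝ) - 1)) • Y := by
  rw [sum_single_second_moment_eq_smul _ _ hY, Fintype.card_fin, Fintype.card_fin]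
  congr 1
  linear_combination ((1 - p : ℝ) / 2) * Real.mul_self_sqrt (zero_le_two : (0 : ℝ) ≤ 2)

/-- the Gaussian second-moment identity used in the strong convergence
proof of the numerical scheme, stated as a deterministic matrix identity:
`∑_{u,v} [(I - β Y Yᵀ) E_{uv} Yᵀ - Y E_{uv}ᵀ (I - β Y Yᵀ)] ·
  (E_{uv} - α Y E_{uv}ᵀ Y - β Y Yᵀ E_{uv}) = -(n-1) Y`
with `α = √2/2`, `β = 1 - √2/2`. -/
theorem second_moment_identity (n p : ℕ) (hp : 1 ≤ p) (hpn : p ≤ n)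
    (Y : Matrix (Fin n) (Fin p) ℝ) (hY : Yᵀ * Y = 1) :
    ∑ u : Fin n, ∑ v : Fin p,
      ((((1 : Matrix (Fin n) (Fin n) ℝ) - (1 - Real.sqrt 2 / 2) • (Y * Yᵀ))
          * Matrix.single u v (1 : ℝ) * Yᵀ
        - Y * (Matrix.single u v (1 : ℝ))ᵀ
          * ((1 : Matrix (Fin n) (Fin n) ℝ) - (1 - Real.sqrt 2 / 2) • (Y * Yᵀ)))
      * (Matrix.single u v (1 : ℝ)
        - (Real.sqrt 2 / 2) • (Y * (Matrix.single u v (1 : ℝ))ᵀ * Y)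
        - (1 - Real.sqrt 2 / 2) • (Y * Yᵀ * Matrix.single u v (1 : ℝ))))
    = (-((n : ℝ) - 1)) • Y :=
  second_moment_identity_general n p Y hY
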